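/- arXiv:2401.14134 — 8 statements merged into one kernel-verified Lean document; each statement's English description precedes it below -/
import Mathlib

section
/- Let α, c, v > 0 with α < 1, c < 1, and a₁, a₂ > 0, and set v₁ = α v / c and v₂ = (1−α) v / (1−c). Then the 2×2 determinant H₂ = v·(a₁²/(α v₁) + a₂²/((1-α) v₂))·(a₁²/c + a₂²/(1-c)) − (a₁²/α + a₂²/(1-α))² equals a₁² a₂² (v₁ − v₂)² / (v₁ v₂ α (1−α)), and in particular is nonnegative. -/
/-- The second leading principal minor of the Hessian of the mixture energy
equals `a₁² a₂² (v₁ − v₂)² / (v₁ v₂ α (1−α))` and in particular is nonnegative. -/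
theorem stmt_0 (α c v v₁ v₂ a₁ a₂ : ℝ)
    (hα : 0 < α) (hα1 : α < 1) (hc : 0 < c) (hc1 : c < 1)
    (hv : 0 < v) (ha₁ : 0 < a₁) (ha₂ : 0 < a₂)
    (hv₁ : v₁ = α * v / c) (hv₂ : v₂ = (1 - α) * v / (1 - c)) :
    v * (a₁ ^ 2 / (α * v₁) + a₂ ^ 2 / ((1 - α) * v₂)) * (a₁ ^ 2 / c + a₂ ^ 2 / (1 - c))
        - (a₁ ^ 2 / α + a₂ ^ 2 / (1 - α)) ^ 2
      = a₁ ^ 2 * a₂ ^ 2 * (v₁ - v₂) ^ 2 / (v₁ * v₂ * α * (1 - α)) ∧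
    0 ≤ v * (a₁ ^ 2 / (α * v₁) + a₂ ^ 2 / ((1 - α) * v₂)) * (a₁ ^ 2 / c + a₂ ^ 2 / (1 - c))
        - (a₁ ^ 2 / α + a₂ ^ 2 / (1 - α)) ^ 2 := by
  have h1α : 0 < 1 - α := by linarith
  have h1c : 0 < 1 - c := by linarith
  have hv1 : 0 < v₁ := by rw [hv₁]; positivity
  have hv2 : 0 < v₂ := by rw [hv₂]; positivity
  have key : v * (a₁ ^ 2 / (α * v₁) + a₂ ^ 2 / ((1 - α) * v₂)) * (a₁ ^ 2 / c + a₂ ^ 2 / (1 - c))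
        - (a₁ ^ 2 / α + a₂ ^ 2 / (1 - α)) ^ 2
      = a₁ ^ 2 * a₂ ^ 2 * (v₁ - v₂) ^ 2 / (v₁ * v₂ * α * (1 - α)) := by
    subst hv₁ hv₂
    field_simp
    ring
  refine ⟨key, key ▸ ?_⟩
  positivity
end

section
/- Under the equilibrium assumption p₁ = p₂ = p, let v₁ = α v/c and v₂ = (1−α) v/(1−c), and let a² = c a₁² + (1−c) a₂². Then the 3×3 symmetric matrix M with entries M₁₁ = v(a₁²/(α v₁) + a₂²/((1−α) v₂)), M₁₂ = M₂₁ = −(a₁²/α + a₂²/(1−α)), M₁₃ = M₃₁ = a₁²/v₁ − a₂²/v₂, M₂₂ = a₁²/c + a₂²/(1−c), M₂₃ = M₃₂ = −(a₁² − a₂²)/v, M₃₃ = a²/v² has determinant zero. -/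
open Matrix
set_option maxHeartbeats 2000000 in

/-- At pressure equilibrium the Hessian of the mixture energy has determinant zero. -/
theorem stmt_1 (α c v v₁ v₂ a₁ a₂ a : ℝ)
    (hα : 0 < α) (hα1 : α < 1) (hc : 0 < c) (hc1 : c < 1)
    (hv : 0 < v) (ha₁ : 0 < a₁) (ha₂ : 0 < a₂)
    (hv₁ : v₁ = α * v / c) (hv₂ : v₂ = (1 - α) * v / (1 - c))
    (ha : a ^ 2 = c * a₁ ^ 2 + (1 - c) * a₂ ^ 2)
    (M : Matrix (Fin 3) (Fin 3) ℝ)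
    (hM : M = !![v * (a₁ ^ 2 / (α * v₁) + a₂ ^ 2 / ((1 - α) * v₂)),
                 -(a₁ ^ 2 / α + a₂ ^ 2 / (1 - α)),
                 a₁ ^ 2 / v₁ - a₂ ^ 2 / v₂;
                 -(a₁ ^ 2 / α + a₂ ^ 2 / (1 - α)),
                 a₁ ^ 2 / c + a₂ ^ 2 / (1 - c),
                 -(a₁ ^ 2 - a₂ ^ 2) / v;
                 a₁ ^ 2 / v₁ - a₂ ^ 2 / v₂,
                 -(a₁ ^ 2 - a₂ ^ 2) / v,
                 a ^ 2 / v ^ 2]) :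
    M.det = 0 := by
  subst hM hv₁ hv₂
  rw [det_fin_three]
  simp only [Matrix.cons_val', Matrix.cons_val_zero, Matrix.cons_val_one, Matrix.head_cons, Matrix.empty_val', Matrix.cons_val_fin_one, Matrix.head_fin_const, Matrix.of_apply, Matrix.cons_val_two, Matrix.tail_cons]
  have h1 : α ≠ 0 := hα.ne'
  have h2 : (1 - α) ≠ 0 := by linarith
  have h3 : c ≠ 0 := hc.ne'
  have h4 : (1 - c) ≠ 0 := by linarith
  have h5 : v ≠ 0 := hv.ne'
  rw [ha]
  field_simp
  ring
end

section
/- The 3×3 symmetric matrix M (Hessian of the mixture internal energy at pressure equilibrium, as above) is positive semidefinite: for all x ∈ ℝ³, xᵀ M x ≥ 0. -/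
/-!
At pressure equilibrium the Hessian splits into one rank-one term per phase,
`a₁² / c · p pᵀ + a₂² / (1 - c) · q qᵀ` with `p = (c/α, -1, c/v)` and
`q = ((1-c)/(1-α), -1, -(1-c)/v)`, and a nonnegative combination of matrices `u uᵀ` is
positive semidefinite.
-/

open Matrix

theorem posSemidef_smul_vecMulVec_self_add {n : Type*} [Fintype n] {s t : ℝ}
    (hs : 0 ≤ s) (ht : 0 ≤ t) (u w : n → ℝ) :
    (s • vecMulVec u u + t • vecMulVec w w).PosSemidef := by
  have hu : (vecMulVec u u).PosSemidef := by
    simpa using posSemidef_vecMulVec_self_star u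
  have hw : (vecMulVec w w).PosSemidef := by
    simpa using posSemidef_vecMulVec_self_star w
  exact (hu.smul hs).add (hw.smul ht)

noncomputable def mixtureHessian (α c v v₁ v₂ a₁ a₂ a : ℝ) : Matrix (Fin 3) (Fin 3) ℝ :=
  !![v * (a₁ ^ 2 / (α * v₁) + a₂ ^ 2 / ((1 - α) * v₂)),
     -(a₁ ^ 2 / α + a₂ ^ 2 / (1 - α)),
     a₁ ^ 2 / v₁ - a₂ ^ 2 / v₂;
     -(a₁ ^ 2 / α + a₂ ^ 2 / (1 - α)),
     a₁ ^ 2 / c + a₂ ^ 2 / (1 - c),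
     -(a₁ ^ 2 - a₂ ^ 2) / v;
     a₁ ^ 2 / v₁ - a₂ ^ 2 / v₂,
     -(a₁ ^ 2 - a₂ ^ 2) / v,
     a ^ 2 / v ^ 2]

theorem mixtureHessian_eq_sum_vecMulVec {α c v a₁ a₂ a : ℝ}
    (hα : α ≠ 0) (hα1 : 1 - α ≠ 0) (hc : c ≠ 0) (hc1 : 1 - c ≠ 0) (hv : v ≠ 0)
    (ha : a ^ 2 = c * a₁ ^ 2 + (1 - c) * a₂ ^ 2) :
    mixtureHessian α c v (α * v / c) ((1 - α) * v / (1 - c)) a₁ a₂ a =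
      (a₁ ^ 2 / c) • vecMulVec ![c / α, -1, c / v] ![c / α, -1, c / v] +
      (a₂ ^ 2 / (1 - c)) • vecMulVec ![(1 - c) / (1 - α), -1, -(1 - c) / v]
        ![(1 - c) / (1 - α), -1, -(1 - c) / v] := by
  ext i j
  fin_cases i <;> fin_cases j <;>
    simp [mixtureHessian, ha] <;> field_simp <;> ring

theorem stmt_2_general (α c v v₁ v₂ a₁ a₂ a : ℝ)
    (hα : 0 < α) (hα1 : α < 1) (hc : 0 < c) (hc1 : c < 1)
    (hv : 0 < v)
    (hv₁ : v₁ = α * v / c) (hv₂ : v₂ = (1 - α) * v / (1 - c))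
    (ha : a ^ 2 = c * a₁ ^ 2 + (1 - c) * a₂ ^ 2)
    (M : Matrix (Fin 3) (Fin 3) ℝ)
    (hM : M = !![v * (a₁ ^ 2 / (α * v₁) + a₂ ^ 2 / ((1 - α) * v₂)),
                 -(a₁ ^ 2 / α + a₂ ^ 2 / (1 - α)),
                 a₁ ^ 2 / v₁ - a₂ ^ 2 / v₂;
                 -(a₁ ^ 2 / α + a₂ ^ 2 / (1 - α)),
                 a₁ ^ 2 / c + a₂ ^ 2 / (1 - c),
                 -(a₁ ^ 2 - a₂ ^ 2) / v;
                 a₁ ^ 2 / v₁ - a₂ ^ 2 / v₂,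
                 -(a₁ ^ 2 - a₂ ^ 2) / v,
                 a ^ 2 / v ^ 2]) :
    ∀ x : Fin 3 → ℝ, 0 ≤ x ⬝ᵥ M.mulVec x := by
  have hM : M = mixtureHessian α c v v₁ v₂ a₁ a₂ a := hM
  subst hv₁ hv₂
  rw [mixtureHessian_eq_sum_vecMulVec hα.ne' (sub_ne_zero.2 hα1.ne') hc.ne'
    (sub_ne_zero.2 hc1.ne') hv.ne' ha] at hM
  have hPSD : M.PosSemidef := hM ▸ posSemidef_smul_vecMulVec_self_add
    (div_nonneg (sq_nonneg a₁) hc.le) (div_nonneg (sq_nonneg a₂) (sub_pos.2 hc1).le) _ _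
  simpa using hPSD.dotProduct_mulVec_nonneg

/-- The Hessian of the mixture internal energy at pressure equilibrium is
positive semidefinite. -/
theorem stmt_2 (α c v v₁ v₂ a₁ a₂ a : ℝ)
    (hα : 0 < α) (hα1 : α < 1) (hc : 0 < c) (hc1 : c < 1)
    (hv : 0 < v) (ha₁ : 0 < a₁) (ha₂ : 0 < a₂)
    (hv₁ : v₁ = α * v / c) (hv₂ : v₂ = (1 - α) * v / (1 - c))
    (ha : a ^ 2 = c * a₁ ^ 2 + (1 - c) * a₂ ^ 2)
    (M : Matrix (Fin 3) (Fin 3) ℝ)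
    (hM : M = !![v * (a₁ ^ 2 / (α * v₁) + a₂ ^ 2 / ((1 - α) * v₂)),
                 -(a₁ ^ 2 / α + a₂ ^ 2 / (1 - α)),
                 a₁ ^ 2 / v₁ - a₂ ^ 2 / v₂;
                 -(a₁ ^ 2 / α + a₂ ^ 2 / (1 - α)),
                 a₁ ^ 2 / c + a₂ ^ 2 / (1 - c),
                 -(a₁ ^ 2 - a₂ ^ 2) / v;
                 a₁ ^ 2 / v₁ - a₂ ^ 2 / v₂,
                 -(a₁ ^ 2 - a₂ ^ 2) / v,
                 a ^ 2 / v ^ 2]) :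
    ∀ x : Fin 3 → ℝ, 0 ≤ x ⬝ᵥ M.mulVec x :=
  stmt_2_general α c v v₁ v₂ a₁ a₂ a hα hα1 hc hc1 hv hv₁ hv₂ ha M hM
end

section
/- Let A be the 5×5 equilibrium Jacobian of the barotropic SHTC two-fluid system (entries given in terms of u, α₁, α₂ = 1−α₁, c₁, c₂ = 1−c₁, ρ, ρ₁, ρ₂, a₁, a₂ with the consistency relations α₁ρ₁ = c₁ρ, α₂ρ₂ = c₂ρ and ∂ρ₂/∂w₃ = (α₂ − α₁c₂)/α₂²). Then the vector R₁₊ = (α₁, 1, 1, u + a₁, a₁/(α₁ρ₁))ᵀ satisfies A·R₁₊ = (u + a₁)·R₁₊. -/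
/-!
Checking `A R₁₊ = (u + a₁) R₁₊` row by row: rows 1 and 3 are immediate, row 2 is the relation
`α₁ρ₁ = c₁ρ`, and rows 4 and 5 both reduce to the identity
`D / ρ₂ = 1 / (α₂ρ₂) - α₁ / (α₂ρ)`, which is `α₂ρ₂ = c₂ρ` rewritten.
-/

open Matrix

section
variable {α c ρ ρ₂ D : ℝ}

theorem D_div_rho₂_eq (hα : 1 - α ≠ 0) (hρ : ρ ≠ 0) (hρ₂ : ρ₂ ≠ 0)
    (h : (1 - α) * ρ₂ = (1 - c) * ρ) (hD : D = ((1 - α) - α * (1 - c)) / (1 - α) ^ 2) :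
    D / ρ₂ = 1 / ((1 - α) * ρ₂) - α / ((1 - α) * ρ) := by
  subst hD
  field_simp
  linear_combination α * h

theorem one_sub_mul_div_rho₂_mul_D_eq (hα : 1 - α ≠ 0) (hρ : ρ ≠ 0) (hρ₂ : ρ₂ ≠ 0)
    (h : (1 - α) * ρ₂ = (1 - c) * ρ) (hD : D = ((1 - α) - α * (1 - c)) / (1 - α) ^ 2) :
    (1 - c) * (ρ / ρ₂) * D = 1 - α * (1 - c) / (1 - α) := by
  have hρ₂_eq : (1 - c) * ρ / ((1 - α) * ρ₂) = 1 := by rw [← h, div_self (mul_ne_zero hα hρ₂)]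
  calc (1 - c) * (ρ / ρ₂) * D = (1 - c) * ρ * (D / ρ₂) := by ring
    _ = (1 - c) * ρ / ((1 - α) * ρ₂) - α * (1 - c) / (1 - α) := by
      rw [D_div_rho₂_eq hα hρ hρ₂ h hD]; field_simp
    _ = 1 - α * (1 - c) / (1 - α) := by rw [hρ₂_eq]

end

theorem stmt_6_general (u a₁ a₂ α₁ c₁ ρ ρ₁ ρ₂ : ℝ)
    (hα₁ : 0 < α₁) (hα₁1 : α₁ < 1)
    (hρ : 0 < ρ) (hρ₁ : 0 < ρ₁) (hρ₂ : 0 < ρ₂)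
    (h1 : α₁ * ρ₁ = c₁ * ρ) (h2 : (1 - α₁) * ρ₂ = (1 - c₁) * ρ)
    (D : ℝ) (hDdef : D = ((1 - α₁) - α₁ * (1 - c₁)) / (1 - α₁) ^ 2)
    (A : Matrix (Fin 5) (Fin 5) ℝ)
    (hA : A = !![u, 0, -α₁ * u, α₁, 0;
                 0, u, -c₁ * u, c₁, c₁ * (1 - c₁) * ρ;
                 0, 0, 0, 1, 0;
                 -a₁ ^ 2 * c₁ / α₁ + a₂ ^ 2 * (1 - c₁) / (1 - α₁), a₁ ^ 2 - a₂ ^ 2,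
                   -u ^ 2 + c₁ * a₁ ^ 2 + (1 - c₁) * a₂ ^ 2 * (ρ / ρ₂) * D, 2 * u, 0;
                 -a₁ ^ 2 / (α₁ * ρ) - a₂ ^ 2 / ((1 - α₁) * ρ), a₁ ^ 2 / (α₁ * ρ₁) + a₂ ^ 2 / ((1 - α₁) * ρ₂),
                   a₁ ^ 2 / ρ - (a₂ ^ 2 / ρ₂) * D, 0, u]) :
    A.mulVec ![α₁, 1, 1, u + a₁, a₁ / (α₁ * ρ₁)] =
      (u + a₁) • ![α₁, 1, 1, u + a₁, a₁ / (α₁ * ρ₁)] := by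
  have hα : α₁ ≠ 0 := hα₁.ne'
  have hα₂ : 1 - α₁ ≠ 0 := sub_ne_zero.2 hα₁1.ne'
  have hw : c₁ * ρ * (a₁ / (α₁ * ρ₁)) = a₁ := by
    rw [← h1]; field_simp [mul_ne_zero hα hρ₁.ne']
  have hD := D_div_rho₂_eq hα₂ hρ.ne' hρ₂.ne' h2 hDdef
  have hρD := one_sub_mul_div_rho₂_mul_D_eq hα₂ hρ.ne' hρ₂.ne' h2 hDdef
  subst hA
  ext i
  fin_cases i <;>
    simp only [mulVec, dotProduct, Fin.sum_univ_five, Fin.zero_eta, Fin.mk_one, Fin.reduceFinMk,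
      Fin.isValue, of_apply, cons_val', cons_val_zero, cons_val_one, cons_val, cons_val_fin_one,
      Pi.smul_apply, smul_eq_mul, neg_mul, zero_mul, mul_one, one_mul, add_zero, zero_add]
  · ring
  · linear_combination (1 - c₁) * hw
  · linear_combination a₂ ^ 2 * hρD - a₁ ^ 2 * c₁ * mul_inv_cancel₀ hα
  · linear_combination (-a₂ ^ 2) * hD - a₁ ^ 2 / ρ * mul_inv_cancel₀ hα

/-- `R₁₊ = (α₁, 1, 1, u + a₁, a₁/(α₁ρ₁))ᵀ` is an eigenvector of the equilibrium
Jacobian `A` with eigenvalue `u + a₁`. -/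
theorem stmt_6 (u a₁ a₂ α₁ c₁ ρ ρ₁ ρ₂ : ℝ)
    (ha₁ : 0 < a₁) (ha₂ : 0 < a₂) (hα₁ : 0 < α₁) (hα₁1 : α₁ < 1)
    (hc₁ : 0 < c₁) (hc₁1 : c₁ < 1) (hρ : 0 < ρ) (hρ₁ : 0 < ρ₁) (hρ₂ : 0 < ρ₂)
    (h1 : α₁ * ρ₁ = c₁ * ρ) (h2 : (1 - α₁) * ρ₂ = (1 - c₁) * ρ)
    (D : ℝ) (hDdef : D = ((1 - α₁) - α₁ * (1 - c₁)) / (1 - α₁) ^ 2)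
    (A : Matrix (Fin 5) (Fin 5) ℝ)
    (hA : A = !![u, 0, -α₁ * u, α₁, 0;
                 0, u, -c₁ * u, c₁, c₁ * (1 - c₁) * ρ;
                 0, 0, 0, 1, 0;
                 -a₁ ^ 2 * c₁ / α₁ + a₂ ^ 2 * (1 - c₁) / (1 - α₁), a₁ ^ 2 - a₂ ^ 2,
                   -u ^ 2 + c₁ * a₁ ^ 2 + (1 - c₁) * a₂ ^ 2 * (ρ / ρ₂) * D, 2 * u, 0;
                 -a₁ ^ 2 / (α₁ * ρ) - a₂ ^ 2 / ((1 - α₁) * ρ), a₁ ^ 2 / (α₁ * ρ₁) + a₂ ^ 2 / ((1 - α₁) * ρ₂),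
                   a₁ ^ 2 / ρ - (a₂ ^ 2 / ρ₂) * D, 0, u]) :
    A.mulVec ![α₁, 1, 1, u + a₁, a₁ / (α₁ * ρ₁)] =
      (u + a₁) • ![α₁, 1, 1, u + a₁, a₁ / (α₁ * ρ₁)] :=
  stmt_6_general u a₁ a₂ α₁ c₁ ρ ρ₁ ρ₂ hα₁ hα₁1 hρ hρ₁ hρ₂ h1 h2 D hDdef A hA
end

section
/- With A as in the previous context, the vector R₂₋ = (α₁, 0, 1, u − a₂, a₂/(α₂ρ₂))ᵀ satisfies A·R₂₋ = (u − a₂)·R₂₋. -/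
/-!
Rows 1 and 3 of `A * R₂₋ = (u - a₂) • R₂₋` hold identically (row 3 already after
simplification). In rows 2, 4 and 5, once denominators are cleared, the defect is a multiple
of the closure relation `α₂ ρ₂ = c₂ ρ`; this is exactly what the choice of `D` achieves in
rows 4 and 5.
-/

open Matrix

theorem stmt_7_general (u a₁ a₂ α₁ c₁ ρ ρ₁ ρ₂ : ℝ)
    (hα₁ : 0 < α₁) (hα₁1 : α₁ < 1)
    (hρ : 0 < ρ) (hρ₂ : 0 < ρ₂)
    (h2 : (1 - α₁) * ρ₂ = (1 - c₁) * ρ)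
    (D : ℝ) (hDdef : D = ((1 - α₁) - α₁ * (1 - c₁)) / (1 - α₁) ^ 2)
    (A : Matrix (Fin 5) (Fin 5) ℝ)
    (hA : A = !![u, 0, -α₁ * u, α₁, 0;
                 0, u, -c₁ * u, c₁, c₁ * (1 - c₁) * ρ;
                 0, 0, 0, 1, 0;
                 -a₁ ^ 2 * c₁ / α₁ + a₂ ^ 2 * (1 - c₁) / (1 - α₁), a₁ ^ 2 - a₂ ^ 2,
                   -u ^ 2 + c₁ * a₁ ^ 2 + (1 - c₁) * a₂ ^ 2 * (ρ / ρ₂) * D, 2 * u, 0;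
                 -a₁ ^ 2 / (α₁ * ρ) - a₂ ^ 2 / ((1 - α₁) * ρ), a₁ ^ 2 / (α₁ * ρ₁) + a₂ ^ 2 / ((1 - α₁) * ρ₂),
                   a₁ ^ 2 / ρ - (a₂ ^ 2 / ρ₂) * D, 0, u]) :
    A.mulVec ![α₁, 0, 1, u - a₂, a₂ / ((1 - α₁) * ρ₂)] =
      (u - a₂) • ![α₁, 0, 1, u - a₂, a₂ / ((1 - α₁) * ρ₂)] := by
  have hα₁0 : α₁ ≠ 0 := hα₁.ne'
  have hα₂0 : 1 - α₁ ≠ 0 := sub_ne_zero.mpr hα₁1.ne'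
  have hρ0 : ρ ≠ 0 := hρ.ne'
  have hρ₂0 : ρ₂ ≠ 0 := hρ₂.ne'
  subst hA hDdef
  ext i
  fin_cases i <;>
    simp only [mulVec, dotProduct, Fin.sum_univ_five, of_apply, cons_val, Fin.reduceFinMk,
      Pi.smul_apply, smul_eq_mul, zero_mul, mul_zero, add_zero, zero_add] <;>
    field_simp
  · ring
  · linear_combination (-(c₁ * a₂)) * h2
  · linear_combination (-(a₂ ^ 2 * (1 - α₁ - α₁ * (1 - c₁)))) * h2
  · linear_combination (-(α₁ * a₂ ^ 2)) * h2

/-- `R₂₋ = (α₁, 0, 1, u − a₂, a₂/(α₂ρ₂))ᵀ` is an eigenvector of the equilibrium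
Jacobian `A` with eigenvalue `u − a₂`. -/
theorem stmt_7 (u a₁ a₂ α₁ c₁ ρ ρ₁ ρ₂ : ℝ)
    (ha₁ : 0 < a₁) (ha₂ : 0 < a₂) (hα₁ : 0 < α₁) (hα₁1 : α₁ < 1)
    (hc₁ : 0 < c₁) (hc₁1 : c₁ < 1) (hρ : 0 < ρ) (hρ₁ : 0 < ρ₁) (hρ₂ : 0 < ρ₂)
    (h1 : α₁ * ρ₁ = c₁ * ρ) (h2 : (1 - α₁) * ρ₂ = (1 - c₁) * ρ)
    (D : ℝ) (hDdef : D = ((1 - α₁) - α₁ * (1 - c₁)) / (1 - α₁) ^ 2)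
    (A : Matrix (Fin 5) (Fin 5) ℝ)
    (hA : A = !![u, 0, -α₁ * u, α₁, 0;
                 0, u, -c₁ * u, c₁, c₁ * (1 - c₁) * ρ;
                 0, 0, 0, 1, 0;
                 -a₁ ^ 2 * c₁ / α₁ + a₂ ^ 2 * (1 - c₁) / (1 - α₁), a₁ ^ 2 - a₂ ^ 2,
                   -u ^ 2 + c₁ * a₁ ^ 2 + (1 - c₁) * a₂ ^ 2 * (ρ / ρ₂) * D, 2 * u, 0;
                 -a₁ ^ 2 / (α₁ * ρ) - a₂ ^ 2 / ((1 - α₁) * ρ), a₁ ^ 2 / (α₁ * ρ₁) + a₂ ^ 2 / ((1 - α₁) * ρ₂),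
                   a₁ ^ 2 / ρ - (a₂ ^ 2 / ρ₂) * D, 0, u]) :
    A.mulVec ![α₁, 0, 1, u - a₂, a₂ / ((1 - α₁) * ρ₂)] =
      (u - a₂) • ![α₁, 0, 1, u - a₂, a₂ / ((1 - α₁) * ρ₂)] :=
  stmt_7_general u a₁ a₂ α₁ c₁ ρ ρ₁ ρ₂ hα₁ hα₁1 hρ hρ₂ h2 D hDdef A hA
end

section
/- With A as in the previous context and ε = −(α₁c₂ − α₂c₁)/(α₂c₁), the vector R_C = (α₁ε + α₁/c₁, 1, ε, uε, 0)ᵀ satisfies A·R_C = u·R_C. -/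
/-!
Rows 1–3 of `A R_C = u R_C` hold identically. After eliminating `ρ₁` and `ρ₂` through
`α₁ ρ₁ = c₁ ρ` and `α₂ ρ₂ = c₂ ρ`, rows 4 and 5 both become `a₂²` times the relation
`α₂ c₁ (1 - ε) = α₁ c₂` that defines `ε`.
-/

open Matrix

section ContactEigenvector

variable {K : Type*} [Field K] {u a₁ a₂ α₁ c₁ ρ ρ₁ ρ₂ D ε : K}

theorem contact_eps_relation (hα₂ : 1 - α₁ ≠ 0) (hc₁ : c₁ ≠ 0)
    (hε : ε = -(α₁ * (1 - c₁) - (1 - α₁) * c₁) / ((1 - α₁) * c₁)) :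
    (1 - α₁) * c₁ * (1 - ε) = α₁ * (1 - c₁) := by
  subst hε
  field_simp
  ring

theorem contact_row_four (hα₁ : α₁ ≠ 0) (hα₂ : 1 - α₁ ≠ 0) (hc₁ : c₁ ≠ 0) (hc₂ : 1 - c₁ ≠ 0)
    (hρ : ρ ≠ 0) (h2 : (1 - α₁) * ρ₂ = (1 - c₁) * ρ)
    (hD : D = ((1 - α₁) - α₁ * (1 - c₁)) / (1 - α₁) ^ 2)
    (hε : (1 - α₁) * c₁ * (1 - ε) = α₁ * (1 - c₁)) :
    (-(a₁ ^ 2 * c₁) / α₁ + a₂ ^ 2 * (1 - c₁) / (1 - α₁)) * (α₁ * ε + α₁ / c₁)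
        + (a₁ ^ 2 - a₂ ^ 2) + (-u ^ 2 + c₁ * a₁ ^ 2 + (1 - c₁) * a₂ ^ 2 * (ρ / ρ₂) * D) * ε
        + 2 * u * (u * ε) = u * (u * ε) := by
  have hρ₂ : ρ₂ = (1 - c₁) * ρ / (1 - α₁) := by rw [← h2, mul_div_cancel_left₀ _ hα₂]
  rw [hρ₂, hD]
  field_simp
  linear_combination -a₂ ^ 2 * hε

theorem contact_row_five (hα₁ : α₁ ≠ 0) (hα₂ : 1 - α₁ ≠ 0) (hc₁ : c₁ ≠ 0) (hc₂ : 1 - c₁ ≠ 0)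
    (hρ : ρ ≠ 0) (h1 : α₁ * ρ₁ = c₁ * ρ) (h2 : (1 - α₁) * ρ₂ = (1 - c₁) * ρ)
    (hD : D = ((1 - α₁) - α₁ * (1 - c₁)) / (1 - α₁) ^ 2)
    (hε : (1 - α₁) * c₁ * (1 - ε) = α₁ * (1 - c₁)) :
    (-a₁ ^ 2 / (α₁ * ρ) - a₂ ^ 2 / ((1 - α₁) * ρ)) * (α₁ * ε + α₁ / c₁)
        + (a₁ ^ 2 / (α₁ * ρ₁) + a₂ ^ 2 / ((1 - α₁) * ρ₂)) + (a₁ ^ 2 / ρ - a₂ ^ 2 / ρ₂ * D) * ε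
      = 0 := by
  have hρ₂ : ρ₂ = (1 - c₁) * ρ / (1 - α₁) := by rw [← h2, mul_div_cancel_left₀ _ hα₂]
  rw [h1, h2, hρ₂, hD]
  field_simp
  linear_combination a₂ ^ 2 * hε

end ContactEigenvector

theorem stmt_8_general (u a₁ a₂ α₁ c₁ ρ ρ₁ ρ₂ : ℝ)
    (hα₁ : 0 < α₁) (hα₁1 : α₁ < 1)
    (hc₁ : 0 < c₁) (hρ₂ : 0 < ρ₂)
    (h1 : α₁ * ρ₁ = c₁ * ρ) (h2 : (1 - α₁) * ρ₂ = (1 - c₁) * ρ)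
    (D : ℝ) (hDdef : D = ((1 - α₁) - α₁ * (1 - c₁)) / (1 - α₁) ^ 2)
    (A : Matrix (Fin 5) (Fin 5) ℝ)
    (hA : A = !![u, 0, -α₁ * u, α₁, 0;
                 0, u, -c₁ * u, c₁, c₁ * (1 - c₁) * ρ;
                 0, 0, 0, 1, 0;
                 -a₁ ^ 2 * c₁ / α₁ + a₂ ^ 2 * (1 - c₁) / (1 - α₁), a₁ ^ 2 - a₂ ^ 2,
                   -u ^ 2 + c₁ * a₁ ^ 2 + (1 - c₁) * a₂ ^ 2 * (ρ / ρ₂) * D, 2 * u, 0;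
                 -a₁ ^ 2 / (α₁ * ρ) - a₂ ^ 2 / ((1 - α₁) * ρ), a₁ ^ 2 / (α₁ * ρ₁) + a₂ ^ 2 / ((1 - α₁) * ρ₂),
                   a₁ ^ 2 / ρ - (a₂ ^ 2 / ρ₂) * D, 0, u])
    (ε : ℝ) (hε : ε = -(α₁ * (1 - c₁) - (1 - α₁) * c₁) / ((1 - α₁) * c₁)) :
    A.mulVec ![α₁ * ε + α₁ / c₁, 1, ε, u * ε, 0] =
      u • ![α₁ * ε + α₁ / c₁, 1, ε, u * ε, 0] := by
  have hα₂ : 1 - α₁ ≠ 0 := by linarith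
  have hc₂ρ : (1 - c₁) * ρ ≠ 0 := h2 ▸ mul_ne_zero hα₂ hρ₂.ne'
  have hrel := contact_eps_relation hα₂ hc₁.ne' hε
  subst hA
  funext i
  fin_cases i <;>
    simp only [mulVec, dotProduct, Fin.sum_univ_five, of_apply, cons_val', cons_val_fin_one,
      cons_val, cons_val_zero, cons_val_one, Fin.reduceFinMk, Fin.zero_eta, Fin.mk_one, Fin.isValue,
      Pi.smul_apply, smul_eq_mul, neg_mul, zero_mul, one_mul, mul_zero, mul_one, zero_add, add_zero]
  · ring
  · ring
  · exact contact_row_four hα₁.ne' hα₂ hc₁.ne' (left_ne_zero_of_mul hc₂ρ)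
      (right_ne_zero_of_mul hc₂ρ) h2 hDdef hrel
  · exact contact_row_five hα₁.ne' hα₂ hc₁.ne' (left_ne_zero_of_mul hc₂ρ)
      (right_ne_zero_of_mul hc₂ρ) h1 h2 hDdef hrel

/-- The contact eigenvector `R_C` satisfies `A·R_C = u·R_C`. -/
theorem stmt_8 (u a₁ a₂ α₁ c₁ ρ ρ₁ ρ₂ : ℝ)
    (ha₁ : 0 < a₁) (ha₂ : 0 < a₂) (hα₁ : 0 < α₁) (hα₁1 : α₁ < 1)
    (hc₁ : 0 < c₁) (hc₁1 : c₁ < 1) (hρ : 0 < ρ) (hρ₁ : 0 < ρ₁) (hρ₂ : 0 < ρ₂)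
    (h1 : α₁ * ρ₁ = c₁ * ρ) (h2 : (1 - α₁) * ρ₂ = (1 - c₁) * ρ)
    (D : ℝ) (hDdef : D = ((1 - α₁) - α₁ * (1 - c₁)) / (1 - α₁) ^ 2)
    (A : Matrix (Fin 5) (Fin 5) ℝ)
    (hA : A = !![u, 0, -α₁ * u, α₁, 0;
                 0, u, -c₁ * u, c₁, c₁ * (1 - c₁) * ρ;
                 0, 0, 0, 1, 0;
                 -a₁ ^ 2 * c₁ / α₁ + a₂ ^ 2 * (1 - c₁) / (1 - α₁), a₁ ^ 2 - a₂ ^ 2,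
                   -u ^ 2 + c₁ * a₁ ^ 2 + (1 - c₁) * a₂ ^ 2 * (ρ / ρ₂) * D, 2 * u, 0;
                 -a₁ ^ 2 / (α₁ * ρ) - a₂ ^ 2 / ((1 - α₁) * ρ), a₁ ^ 2 / (α₁ * ρ₁) + a₂ ^ 2 / ((1 - α₁) * ρ₂),
                   a₁ ^ 2 / ρ - (a₂ ^ 2 / ρ₂) * D, 0, u])
    (ε : ℝ) (hε : ε = -(α₁ * (1 - c₁) - (1 - α₁) * c₁) / ((1 - α₁) * c₁)) :
    A.mulVec ![α₁ * ε + α₁ / c₁, 1, ε, u * ε, 0] =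
      u • ![α₁ * ε + α₁ / c₁, 1, ε, u * ε, 0] :=
  stmt_8_general u a₁ a₂ α₁ c₁ ρ ρ₁ ρ₂ hα₁ hα₁1 hc₁ hρ₂ h1 h2 D hDdef A hA ε hε
end

section
/- With g as in the previous context and R₁± = (α₁, 1, 1, u±a₁, ±a₁/(α₁ρ₁))ᵀ, assuming α₁ρ₁ = c₁ρ and α₂ρ₂ = c₂ρ, the inner product g · R₁± equals −a₁²/α₁, which is nonzero. -/
/-!
Only the first three entries of `g` are nonzero and the first three entries of `R₁±` are
`(α₁, 1, 1)`, so the sign and the velocity `u` drop out. Since `α₂ρ₂ = c₂ρ`, the factor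
`(c₂/α₂)(ρ/ρ₂)` in the third entry of `g` is `1`, and then the `a₂²`-terms cancel exactly
because `D = 1/α₂ − α₁c₂/α₂²`, leaving `a₁²c₁/α₁ − a₁²/α₁ − a₁²c₁/α₁ = −a₁²/α₁`.
-/

open Matrix

theorem cons_dotProduct_five_of_tail_zero {R : Type*} [NonUnitalNonAssocSemiring R]
    (g₁ g₂ g₃ x₁ x₂ x₃ x₄ x₅ : R) :
    ![g₁, g₂, g₃, 0, 0] ⬝ᵥ ![x₁, x₂, x₃, x₄, x₅] = g₁ * x₁ + g₂ * x₂ + g₃ * x₃ := by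
  simp [dotProduct, Fin.sum_univ_five]

theorem div_mul_div_eq_one_of_mul_eq {K : Type*} [Field K] {a b c d : K}
    (ha : a ≠ 0) (hb : b ≠ 0) (h : a * b = c * d) : c / a * (d / b) = 1 := by
  rw [div_mul_div_comm, ← h, div_self (mul_ne_zero ha hb)]

theorem g_coords_weighted_sum_eq {K : Type*} [Field K] {a₁ a₂ α₁ α₂ c₁ c₂ ρ ρ₂ : K}
    (hα₁ : α₁ ≠ 0) (hα₂ : α₂ ≠ 0) (hρ₂ : ρ₂ ≠ 0) (h : α₂ * ρ₂ = c₂ * ρ) :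
    (a₁ ^ 2 * c₁ / α₁ ^ 2 + a₂ ^ 2 * c₂ / α₂ ^ 2) * α₁ + -(a₁ ^ 2 / α₁ + a₂ ^ 2 / α₂) +
        (-a₁ ^ 2 * c₁ / α₁ + a₂ ^ 2 * (c₂ / α₂) * (ρ / ρ₂) * ((α₂ - α₁ * c₂) / α₂ ^ 2)) =
      -(a₁ ^ 2 / α₁) := by
  rw [mul_assoc (a₂ ^ 2), div_mul_div_eq_one_of_mul_eq hα₂ hρ₂ h, mul_one]
  field_simp
  ring

theorem stmt_11_general (u a₁ a₂ α₁ c₁ ρ ρ₁ ρ₂ : ℝ)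
    (ha₁ : 0 < a₁) (hα₁ : 0 < α₁) (hα₁1 : α₁ < 1)
    (hρ₂ : 0 < ρ₂)
    (h2 : (1 - α₁) * ρ₂ = (1 - c₁) * ρ)
    (D : ℝ) (hDdef : D = ((1 - α₁) - α₁ * (1 - c₁)) / (1 - α₁) ^ 2)
    (g : Fin 5 → ℝ)
    (hg : g = ![a₁ ^ 2 * c₁ / α₁ ^ 2 + a₂ ^ 2 * (1 - c₁) / (1 - α₁) ^ 2,
                -(a₁ ^ 2 / α₁ + a₂ ^ 2 / (1 - α₁)),
                -a₁ ^ 2 * c₁ / α₁ + a₂ ^ 2 * ((1 - c₁) / (1 - α₁)) * (ρ / ρ₂) * D,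
                0, 0]) :
    (∀ s : ℝ, s = 1 ∨ s = -1 →
      g ⬝ᵥ ![α₁, 1, 1, u + s * a₁, s * (a₁ / (α₁ * ρ₁))] = -(a₁ ^ 2 / α₁)) ∧
    -(a₁ ^ 2 / α₁) ≠ 0 := by
  subst hg hDdef
  refine ⟨fun s _ => ?_, neg_ne_zero.mpr (by positivity)⟩
  rw [cons_dotProduct_five_of_tail_zero, mul_one, mul_one]
  exact g_coords_weighted_sum_eq hα₁.ne' (sub_ne_zero.mpr hα₁1.ne') hρ₂.ne' h2

/-- Shizuta–Kawashima condition for the fields `R₁±`: `g · R₁± = −a₁²/α₁ ≠ 0`. -/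
theorem stmt_11 (u a₁ a₂ α₁ c₁ ρ ρ₁ ρ₂ : ℝ)
    (ha₁ : 0 < a₁) (ha₂ : 0 < a₂) (hα₁ : 0 < α₁) (hα₁1 : α₁ < 1)
    (hc₁ : 0 < c₁) (hc₁1 : c₁ < 1) (hρ : 0 < ρ) (hρ₁ : 0 < ρ₁) (hρ₂ : 0 < ρ₂)
    (h1 : α₁ * ρ₁ = c₁ * ρ) (h2 : (1 - α₁) * ρ₂ = (1 - c₁) * ρ)
    (D : ℝ) (hDdef : D = ((1 - α₁) - α₁ * (1 - c₁)) / (1 - α₁) ^ 2)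
    (g : Fin 5 → ℝ)
    (hg : g = ![a₁ ^ 2 * c₁ / α₁ ^ 2 + a₂ ^ 2 * (1 - c₁) / (1 - α₁) ^ 2,
                -(a₁ ^ 2 / α₁ + a₂ ^ 2 / (1 - α₁)),
                -a₁ ^ 2 * c₁ / α₁ + a₂ ^ 2 * ((1 - c₁) / (1 - α₁)) * (ρ / ρ₂) * D,
                0, 0]) :
    (∀ s : ℝ, s = 1 ∨ s = -1 →
      g ⬝ᵥ ![α₁, 1, 1, u + s * a₁, s * (a₁ / (α₁ * ρ₁))] = -(a₁ ^ 2 / α₁)) ∧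
    -(a₁ ^ 2 / α₁) ≠ 0 :=
  stmt_11_general u a₁ a₂ α₁ c₁ ρ ρ₁ ρ₂ ha₁ hα₁ hα₁1 hρ₂ h2 D hDdef g hg
end

section
/- Let M be the 3×3 Hessian matrix of the mixture energy at pressure equilibrium (entries as in the context). Then M has rank exactly 2, i.e., det M = 0, and the leading 2×2 minor of M, which equals a₁²a₂²(v₁−v₂)²/(v₁v₂α(1−α)), is nonzero whenever v₁ ≠ v₂. -/
set_option maxHeartbeats 2000000


open Matrix

private lemma rank_le_two_of_det_zero {A : Matrix (Fin 3) (Fin 3) ℝ} (h : A.det = 0) :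
    A.rank ≤ 2 := by
  obtain ⟨x, hx, hAx⟩ := (Matrix.exists_mulVec_eq_zero_iff).mpr h
  have hker : 0 < Module.finrank ℝ (LinearMap.ker A.mulVecLin) := by
    rw [Module.finrank_pos_iff]
    refine ⟨⟨x, by simpa using hAx⟩, 0, ?_⟩
    simp [Subtype.ext_iff, hx]
  have h3 := A.mulVecLin.finrank_range_add_finrank_ker
  have hpi : Module.finrank ℝ (Fin 3 → ℝ) = 3 := by simp
  rw [hpi] at h3
  rw [Matrix.rank]
  omega

private lemma two_le_rank_of_minor {A : Matrix (Fin 3) (Fin 3) ℝ}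
    (h : A 0 0 * A 1 1 - A 0 1 * A 1 0 ≠ 0) : 2 ≤ A.rank := by
  set f : Fin 2 → Fin 3 := ![0, 1] with hf
  have hfac : A.submatrix f f =
      ((1 : Matrix (Fin 3) (Fin 3) ℝ).submatrix f (Equiv.refl (Fin 3))) * A *
        ((1 : Matrix (Fin 3) (Fin 3) ℝ).submatrix (Equiv.refl (Fin 3)) f) := by
    rw [Matrix.one_submatrix_mul, Matrix.mul_submatrix_one]
    simp
  have hdet : (A.submatrix f f).det ≠ 0 := by
    rw [Matrix.det_fin_two]
    simpa [hf] using h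
  have hrk : (A.submatrix f f).rank = 2 := by
    rw [Matrix.rank_of_isUnit _ (Matrix.isUnit_iff_isUnit_det _ |>.mpr
      (isUnit_iff_ne_zero.mpr hdet))]
    simp
  calc 2 = (A.submatrix f f).rank := hrk.symm
    _ ≤ (((1 : Matrix (Fin 3) (Fin 3) ℝ).submatrix f (Equiv.refl (Fin 3))) * A).rank := by
        rw [hfac]; exact Matrix.rank_mul_le_left _ _
    _ ≤ A.rank := Matrix.rank_mul_le_right _ _

/-- The Hessian of the mixture energy at pressure equilibrium has rank exactly 2
when `v₁ ≠ v₂`: its determinant vanishes, while the leading 2×2 minor equals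
`a₁²a₂²(v₁−v₂)²/(v₁v₂α(1−α)) ≠ 0`. -/
theorem stmt_19 (α c v v₁ v₂ a₁ a₂ a : ℝ)
    (hα : 0 < α) (hα1 : α < 1) (hc : 0 < c) (hc1 : c < 1)
    (hv : 0 < v) (ha₁ : 0 < a₁) (ha₂ : 0 < a₂)
    (hv₁ : v₁ = α * v / c) (hv₂ : v₂ = (1 - α) * v / (1 - c)) (hne : v₁ ≠ v₂)
    (ha : a ^ 2 = c * a₁ ^ 2 + (1 - c) * a₂ ^ 2)
    (M : Matrix (Fin 3) (Fin 3) ℝ)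
    (hM : M = !![v * (a₁ ^ 2 / (α * v₁) + a₂ ^ 2 / ((1 - α) * v₂)),
                 -(a₁ ^ 2 / α + a₂ ^ 2 / (1 - α)),
                 a₁ ^ 2 / v₁ - a₂ ^ 2 / v₂;
                 -(a₁ ^ 2 / α + a₂ ^ 2 / (1 - α)),
                 a₁ ^ 2 / c + a₂ ^ 2 / (1 - c),
                 -(a₁ ^ 2 - a₂ ^ 2) / v;
                 a₁ ^ 2 / v₁ - a₂ ^ 2 / v₂,
                 -(a₁ ^ 2 - a₂ ^ 2) / v,
                 a ^ 2 / v ^ 2]) :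
    M.det = 0 ∧
    M 0 0 * M 1 1 - M 0 1 * M 1 0 =
      a₁ ^ 2 * a₂ ^ 2 * (v₁ - v₂) ^ 2 / (v₁ * v₂ * α * (1 - α)) ∧
    M 0 0 * M 1 1 - M 0 1 * M 1 0 ≠ 0 ∧
    M.rank = 2 := by
  have hα' : α ≠ 0 := ne_of_gt hα
  have hα1' : (1 : ℝ) - α ≠ 0 := by linarith
  have hc' : c ≠ 0 := ne_of_gt hc
  have hc1' : (1 : ℝ) - c ≠ 0 := by linarith
  have hv' : v ≠ 0 := ne_of_gt hv
  have hv₁0 : 0 < v₁ := by rw [hv₁]; positivity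
  have hv₂0 : 0 < v₂ := by rw [hv₂]; have : 0 < 1 - α := by linarith
                           have : 0 < 1 - c := by linarith
                           positivity
  have hv₁' : v₁ ≠ 0 := ne_of_gt hv₁0
  have hv₂' : v₂ ≠ 0 := ne_of_gt hv₂0
  have hdet : M.det = 0 := by
    subst hM
    rw [Matrix.det_fin_three]
    norm_num [Matrix.cons_val_zero, Matrix.cons_val_one, Matrix.cons_val_two, Matrix.tail_cons, Matrix.head_cons]
    subst hv₁ hv₂
    field_simp
    ring_nf
    rw [ha]
    ring
  have hminor : M 0 0 * M 1 1 - M 0 1 * M 1 0 =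
      a₁ ^ 2 * a₂ ^ 2 * (v₁ - v₂) ^ 2 / (v₁ * v₂ * α * (1 - α)) := by
    subst hM
    norm_num [Matrix.cons_val_zero, Matrix.cons_val_one]
    subst hv₁ hv₂
    field_simp
    ring
  have hminor' : M 0 0 * M 1 1 - M 0 1 * M 1 0 ≠ 0 := by
    rw [hminor]
    apply div_ne_zero
    · have := sub_ne_zero_of_ne hne
      positivity
    · apply mul_ne_zero (mul_ne_zero (mul_ne_zero hv₁' hv₂') hα') hα1'
  refine ⟨hdet, hminor, hminor', le_antisymm (rank_le_two_of_det_zero hdet)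
    (two_le_rank_of_minor hminor')⟩
end
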